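/- Let S be a (1/n)ℤ-invariant shift-invariant subspace of L²(ℝ), F ⊆ S such that the integer translates {T_j f : f ∈ F, j ∈ ℤ} form a frame for S with bounds A, B. Let P_k be the orthogonal projection onto functions with Fourier support in B_k = ⋃_{j∈ℤ}([k,k+1)+nj). Then {T_j P_k f : f ∈ F, j ∈ ℤ, k=0,…,n−1} is a frame for S with the same bounds A, B. -/

import Mathlib

open MeasureTheory FourierTransform

noncomputable section

/-- The space `L²(ℝ)` of complex-valued square-integrable functions. -/
abbrev L2 := Lp ℂ 2 (volume : Measure ℝ)

/-- The translation operator `T_a f (x) = f (x - a)` on `L²(ℝ)`. -/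
def Tr (a : ℝ) : L2 → L2 :=
  Lp.compMeasurePreserving (fun x => x - a) (measurePreserving_sub_right volume a)

/-- `F` is the Fourier–Plancherel transform on `L²(ℝ)`: a unitary that agrees with the
classical Fourier integral `f̂(ω) = ∫ f(x) e^{-2πiωx} dx` on integrable functions. -/
def IsFourierTransform (F : L2 ≃ₗᵢ[ℂ] L2) : Prop :=
  ∀ f : L2, Integrable (f : ℝ → ℂ) volume → (F f : ℝ → ℂ) =ᵐ[volume] 𝓕 (f : ℝ → ℂ)

/-- The shift-invariant space generated by `f`: the closed span of integer translates. -/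
def SIS (f : L2) : Set L2 :=
  closure (Submodule.span ℂ {g : L2 | ∃ j : ℤ, g = Tr (j : ℝ) f} : Set L2)

/-- `B_k = ⋃_{j ∈ ℤ} ([k, k+1) + n j)`. -/
def Bset (n k : ℕ) : Set ℝ := {ω : ℝ | ∃ j : ℤ, ω - n * j ∈ Set.Ico (k : ℝ) ((k : ℝ) + 1)}

/-- `U_k = {f ∈ L² : f̂ = ĝ · χ_{B_k} for some g ∈ S}`. -/
def Uspace (F : L2 ≃ₗᵢ[ℂ] L2) (S : Set L2) (n k : ℕ) : Set L2 :=
  {f : L2 | ∃ g ∈ S, (F f : ℝ → ℂ) =ᵐ[volume] (Bset n k).indicator (F g : ℝ → ℂ)}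

/-!
On the Fourier side, translation by `a` is multiplication by the character `e^{-2πiaω}`. Hence
`(1/n)ℤ`-invariance of `S` says that `F S` is stable under multiplication by the characters of
period `n`; by density of trigonometric polynomials among continuous `n`-periodic functions and by
dominated convergence it is stable under multiplication by `χ_{B_k}`. So `Q_k w := F⁻¹(χ_{B_k} F w)`
lies in `S`; since `χ_{B_k}` is a real idempotent multiplier commuting with the characters,
`⟪w, T_j P_k f⟫ = ⟪Q_k w, T_j f⟫`, and since the `B_k` partition `ℝ`, `∑ₖ ‖Q_k w‖² = ‖w‖²`.
The frame inequalities for the `Q_k w`, summed over `k`, are the claimed ones.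
-/

open scoped ENNReal
open Filter Topology

lemma AddCircle.coe_eq_coe_iff_exists_zsmul {T x y : ℝ} :
    (x : AddCircle T) = y ↔ ∃ j : ℤ, x = y + j • T := by
  rw [← sub_eq_zero, ← AddCircle.coe_sub, AddCircle.coe_eq_zero_iff]
  exact exists_congr fun j => by constructor <;> intro h <;> linarith

lemma AddCircle.volume_coe_preimage_singleton (T x : ℝ) :
    volume (((↑) : ℝ → AddCircle T) ⁻¹' {(x : AddCircle T)}) = 0 := by
  refine Set.Countable.measure_zero ((Set.countable_range fun j : ℤ => x + j • T).mono ?_) _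
  intro ω hω
  obtain ⟨j, hj⟩ := AddCircle.coe_eq_coe_iff_exists_zsmul.mp hω
  exact ⟨j, hj.symm⟩

section Bset

variable {n k : ℕ}

lemma measurableSet_Bset (n k : ℕ) : MeasurableSet (Bset n k) := by
  have : Bset n k = ⋃ j : ℤ, (fun ω : ℝ => ω - n * j) ⁻¹' Set.Ico (k : ℝ) (k + 1) := by
    ext ω; simp only [Bset, Set.mem_ofPred_eq, Set.mem_iUnion, Set.mem_preimage]
  rw [this]
  exact .iUnion fun j => measurableSet_Ico.preimage (measurable_id.sub_const _)

lemma mem_Bset_iff_exists_floor {ω : ℝ} : ω ∈ Bset n k ↔ ∃ j : ℤ, ⌊ω⌋ = k + n * j := by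
  refine exists_congr fun j => ?_
  have : ⌊ω⌋ = k + n * j ↔ ⌊ω - ((n * j : ℤ) : ℝ)⌋ = k := by rw [Int.floor_sub_intCast]; omega
  rw [this, Int.floor_eq_iff]
  push_cast
  rfl

lemma mem_Bset_iff_floor_emod (hk : k < n) {ω : ℝ} : ω ∈ Bset n k ↔ ⌊ω⌋ % n = k := by
  rw [mem_Bset_iff_exists_floor]
  constructor
  · rintro ⟨j, hj⟩
    rw [hj, Int.add_mul_emod_self_left]
    exact Int.emod_eq_of_lt (by positivity) (by exact_mod_cast hk)
  · intro h
    exact ⟨⌊ω⌋ / n, by rw [← h, Int.emod_def]; ring⟩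

lemma pairwise_disjoint_Bset : Pairwise (Function.onFun Disjoint fun k : Fin n => Bset n k) := by
  intro k l hkl
  refine Set.disjoint_left.mpr fun ω hk hl => hkl (Fin.ext ?_)
  rw [mem_Bset_iff_floor_emod k.2] at hk
  rw [mem_Bset_iff_floor_emod l.2] at hl
  omega

lemma iUnion_Bset (hn : 0 < n) : ⋃ k : Fin n, Bset n k = Set.univ := by
  refine Set.eq_univ_of_forall fun ω => Set.mem_iUnion.mpr ?_
  have h0 : 0 ≤ ⌊ω⌋ % n := Int.emod_nonneg _ (by omega)
  have h1 : ⌊ω⌋ % n < n := Int.emod_lt_of_pos _ (by omega)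
  exact ⟨⟨(⌊ω⌋ % n).toNat, by omega⟩, (mem_Bset_iff_floor_emod (by omega)).mpr (by simp [h0])⟩

lemma mem_Bset_iff_coe_mem {ω : ℝ} :
    ω ∈ Bset n k ↔ (ω : AddCircle (n : ℝ)) ∈ (↑) '' Set.Ico (k : ℝ) (k + 1) := by
  constructor
  · rintro ⟨j, hj⟩
    refine ⟨_, hj, AddCircle.coe_eq_coe_iff_exists_zsmul.mpr ⟨-j, ?_⟩⟩
    rw [neg_zsmul, zsmul_eq_mul]
    ring
  · rintro ⟨y, hy, hyω⟩
    obtain ⟨j, hj⟩ := AddCircle.coe_eq_coe_iff_exists_zsmul.mp hyω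
    exact ⟨-j, by rw [hj] at hy; simpa [zsmul_eq_mul, mul_comm] using hy⟩

lemma ae_coe_mem_closure_iff_mem_Bset :
    ∀ᵐ ω : ℝ, (ω : AddCircle (n : ℝ)) ∈ closure ((↑) '' Set.Ico (k : ℝ) (k + 1)) ↔
      ω ∈ Bset n k := by
  have hclosure : closure (((↑) : ℝ → AddCircle (n : ℝ)) '' Set.Ico (k : ℝ) (k + 1)) ⊆
      (↑) '' Set.Icc (k : ℝ) (k + 1) :=
    closure_minimal (Set.image_mono Set.Ico_subset_Icc_self)
      (isCompact_Icc.image (AddCircle.continuous_mk' _)).isClosed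
  filter_upwards [measure_eq_zero_iff_ae_notMem.mp
    (AddCircle.volume_coe_preimage_singleton (n : ℝ) (k + 1))] with ω hω
  rw [mem_Bset_iff_coe_mem]
  refine ⟨fun h => ?_, fun h => subset_closure h⟩
  obtain ⟨y, ⟨hky, hyk⟩, hyω⟩ := hclosure h
  rcases hyk.lt_or_eq with hlt | rfl
  · exact ⟨y, ⟨hky, hlt⟩, hyω⟩
  · exact absurd hyω.symm hω

end Bset

section LpMultiplier

variable {α E : Type*} [MeasurableSpace α] {μ : Measure α} [NormedAddCommGroup E]

lemma continuous_lpSMul_right (φ : Lp ℂ ∞ μ) : Continuous fun u : Lp ℂ 2 μ => φ • u :=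
  ((ContinuousLinearMap.lsmul ℂ ℂ).holderL μ ∞ 2 2 φ).continuous
lemma tendsto_eLpNorm_zero_of_dominated {p : ℝ≥0∞} (hp : p ≠ ∞) {f : ℕ → α → E} {g : α → ℝ}
    (hf : ∀ m, AEStronglyMeasurable (f m) μ) (hg : MemLp g p μ)
    (hbound : ∀ m, ∀ᵐ x ∂μ, ‖f m x‖ ≤ g x)
    (hlim : ∀ᵐ x ∂μ, Tendsto (fun m => f m x) atTop (𝓝 0)) :
    Tendsto (fun m => eLpNorm (f m) p μ) atTop (𝓝 0) := by
  rcases eq_or_ne p 0 with rfl | hp0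
  · simp
  simp_rw [eLpNorm_eq_lintegral_rpow_enorm_toReal hp0 hp]
  have hint : Tendsto (fun m => ∫⁻ x, ‖f m x‖ₑ ^ p.toReal ∂μ) atTop (𝓝 0) := by
    have hrpow := ENNReal.continuous_rpow_const (y := p.toReal)
    simpa [ENNReal.zero_rpow_of_pos (ENNReal.toReal_pos hp0 hp)] using
      tendsto_lintegral_of_dominated_convergence' (fun x => ‖g x‖ₑ ^ p.toReal)
        (fun m => (hf m).enorm.pow_const _)
        (fun m => (hbound m).mono fun x hx => ENNReal.rpow_le_rpow
          (enorm_le_iff_norm_le.mpr (hx.trans (Real.le_norm_self _))) ENNReal.toReal_nonneg)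
        (lintegral_rpow_enorm_lt_top_of_eLpNorm_lt_top hp0 hp hg.eLpNorm_lt_top).ne
        (hlim.mono fun x hx => (hrpow.tendsto _).comp ((continuous_enorm.tendsto _).comp hx))
  have hroot := ((ENNReal.continuous_rpow_const (y := 1 / p.toReal)).tendsto 0).comp hint
  rwa [ENNReal.zero_rpow_of_pos (one_div_pos.mpr (ENNReal.toReal_pos hp0 hp))] at hroot

lemma tendsto_lpSMul_of_ae_tendsto {φ : ℕ → Lp ℂ ∞ μ} {ψ : Lp ℂ ∞ μ} {C : ℝ}
    (hbound : ∀ m, ∀ᵐ x ∂μ, ‖φ m x‖ ≤ C)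
    (hlim : ∀ᵐ x ∂μ, Tendsto (fun m => φ m x) atTop (𝓝 (ψ x))) (u : Lp ℂ 2 μ) :
    Tendsto (fun m => φ m • u) atTop (𝓝 (ψ • u)) := by
  rw [Lp.tendsto_Lp_iff_tendsto_eLpNorm']
  have hdiff : ∀ m, ⇑(φ m • u) - ⇑(ψ • u) =ᵐ[μ] fun x => (φ m x - ψ x) * u x := fun m => by
    filter_upwards [Lp.coeFn_lpSMul (r := 2) (φ m) u, Lp.coeFn_lpSMul (r := 2) ψ u] with x h1 h2
    simp [h1, h2, sub_mul]
  simp_rw [eLpNorm_congr_ae (hdiff _)]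
  have hψ : ∀ᵐ x ∂μ, ‖ψ x‖ ≤ C := by
    filter_upwards [ae_all_iff.mpr hbound, hlim] with x hx hlimx
    exact le_of_tendsto' ((continuous_norm.tendsto _).comp hlimx) hx
  refine tendsto_eLpNorm_zero_of_dominated ENNReal.ofNat_ne_top
    (fun m => ((Lp.aestronglyMeasurable _).sub (Lp.aestronglyMeasurable _)).mul
      (Lp.aestronglyMeasurable u)) ((Lp.memLp u).norm.const_mul (2 * C)) (fun m => ?_) ?_
  · filter_upwards [hbound m, hψ] with x h1 h2
    rw [norm_mul, two_mul]
    exact mul_le_mul_of_nonneg_right ((norm_sub_le _ _).trans (add_le_add h1 h2)) (norm_nonneg _)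
  · filter_upwards [hlim] with x hx
    simpa using (hx.sub_const (ψ x)).mul_const (u x)

end LpMultiplier

section Partition

variable {α E ι : Type*} [MeasurableSpace α] {μ : Measure α} [NormedAddCommGroup E] [Fintype ι]

lemma eLpNorm_two_sq (f : α → E) : eLpNorm f 2 μ ^ 2 = ∫⁻ x, ‖f x‖ₑ ^ 2 ∂μ := by
  simpa using eLpNorm_nnreal_pow_eq_lintegral (f := f) (μ := μ) (p := 2) two_ne_zero

lemma MeasureTheory.Lp.norm_sq_eq_toReal_lintegral (f : Lp E 2 μ) :
    ‖f‖ ^ 2 = (∫⁻ x, ‖f x‖ₑ ^ 2 ∂μ).toReal := by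
  rw [Lp.norm_def, ← ENNReal.toReal_pow, eLpNorm_two_sq]

lemma sum_norm_sq_eq_of_partition {s : ι → Set α} (hs : ∀ i, MeasurableSet (s i))
    (hdisj : Pairwise (Function.onFun Disjoint s)) (hcover : ⋃ i, s i = Set.univ)
    (u : Lp E 2 μ) {v : ι → Lp E 2 μ} (hv : ∀ i, v i =ᵐ[μ] (s i).indicator u) :
    ∑ i, ‖v i‖ ^ 2 = ‖u‖ ^ 2 := by
  have hpiece : ∀ i, ‖v i‖ ^ 2 = (∫⁻ x in s i, ‖u x‖ₑ ^ 2 ∂μ).toReal := fun i => by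
    rw [Lp.norm_def, ← ENNReal.toReal_pow, eLpNorm_congr_ae (hv i),
      eLpNorm_indicator_eq_eLpNorm_restrict (hs i), eLpNorm_two_sq]
  have hfinite : ∀ i ∈ Finset.univ, ∫⁻ x in s i, ‖u x‖ₑ ^ 2 ∂μ ≠ ∞ := fun i _ =>
    ((setLIntegral_le_lintegral _ _).trans_lt
      (by rw [← eLpNorm_two_sq]; exact ENNReal.pow_lt_top (Lp.eLpNorm_lt_top u))).ne
  simp_rw [hpiece]
  rw [← ENNReal.toReal_sum hfinite,
    ← tsum_fintype (L := SummationFilter.unconditional ι) fun i => ∫⁻ x in s i, ‖u x‖ₑ ^ 2 ∂μ,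
    ← lintegral_iUnion hs hdisj, hcover, Measure.restrict_univ, Lp.norm_sq_eq_toReal_lintegral]

end Partition

section Frame

variable {𝕜 E ι κ : Type*} [RCLike 𝕜] [NormedAddCommGroup E] [InnerProductSpace 𝕜 E]

/-- A non-summable family has `tsum` equal to `0`, so a positive lower frame bound in `tsum` form
already forces summability. -/
lemma summable_norm_inner_sq_of_lower_bound {v : ι → E} {w : E} {A : ℝ} (hA : 0 < A)
    (h : A * ‖w‖ ^ 2 ≤ ∑' i, ‖(inner 𝕜 w (v i) : 𝕜)‖ ^ 2) :
    Summable fun i => ‖(inner 𝕜 w (v i) : 𝕜)‖ ^ 2 := by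
  by_contra hns
  rw [tsum_eq_zero_of_not_summable hns] at h
  have hw : w = 0 := by
    have : ‖w‖ ^ 2 ≤ 0 := nonpos_of_mul_nonpos_right h hA
    simpa using this
  exact hns (by simp [hw])

lemma frame_bounds_of_sum_norm_sq [Fintype κ] {v : ι → E} {A B : ℝ} (hA : 0 < A) {w : E}
    {Q : κ → E} (hQ : ∑ k, ‖Q k‖ ^ 2 = ‖w‖ ^ 2)
    (hframe : ∀ k, A * ‖Q k‖ ^ 2 ≤ ∑' i, ‖(inner 𝕜 (Q k) (v i) : 𝕜)‖ ^ 2 ∧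
      ∑' i, ‖(inner 𝕜 (Q k) (v i) : 𝕜)‖ ^ 2 ≤ B * ‖Q k‖ ^ 2) :
    A * ‖w‖ ^ 2 ≤ ∑' p : κ × ι, ‖(inner 𝕜 (Q p.1) (v p.2) : 𝕜)‖ ^ 2 ∧
      ∑' p : κ × ι, ‖(inner 𝕜 (Q p.1) (v p.2) : 𝕜)‖ ^ 2 ≤ B * ‖w‖ ^ 2 := by
  have hsummable : Summable fun p : κ × ι => ‖(inner 𝕜 (Q p.1) (v p.2) : 𝕜)‖ ^ 2 := by
    refine (summable_prod_of_nonneg fun _ => sq_nonneg _).mpr ⟨fun k => ?_, Summable.of_finite⟩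
    exact summable_norm_inner_sq_of_lower_bound (𝕜 := 𝕜) (v := v) (w := Q k) hA (hframe k).1
  rw [hsummable.tsum_prod, tsum_fintype, ← hQ, Finset.mul_sum, Finset.mul_sum]
  exact ⟨Finset.sum_le_sum fun k _ => (hframe k).1, Finset.sum_le_sum fun k _ => (hframe k).2⟩

end Frame

lemma Real.fourier_comp_sub_right (g : ℝ → ℂ) (a : ℝ) :
    𝓕 (fun x => g (x - a)) = fun w => (𝐞 (-(a * w)) : ℂ) * 𝓕 g w := by
  have h𝓕 : ∀ h : ℝ → ℂ, 𝓕 h = Fourier.fourierIntegral 𝐞 volume h := fun h => by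
    ext w; rw [Real.fourier_real_eq, Fourier.fourierIntegral_def]
  rw [h𝓕, h𝓕]
  convert Fourier.fourierIntegral_comp_add_right 𝐞 volume g (-a) using 2 with w
  · ext x; simp [sub_eq_add_neg]
  · rw [neg_mul, Circle.smul_def, smul_eq_mul]

def expLinf (a : ℝ) : Lp ℂ ∞ (volume : Measure ℝ) :=
  (memLp_top_of_bound
    (by fun_prop : Continuous fun ω : ℝ => (𝐞 (-(a * ω)) : ℂ)).aestronglyMeasurable 1
    (ae_of_all _ fun ω => (norm_eq_of_mem_sphere _).le)).toLp _

lemma coeFn_expLinf (a : ℝ) : expLinf a =ᵐ[volume] fun ω => (𝐞 (-(a * ω)) : ℂ) :=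
  MemLp.coeFn_toLp _

section Fourier

variable {F : L2 ≃ₗᵢ[ℂ] L2}

lemma IsFourierTransform.map_Tr_of_integrable (hF : IsFourierTransform F) (a : ℝ) {f : L2}
    (hf : Integrable (f : ℝ → ℂ)) : F (Tr a f) = expLinf a • F f := by
  have hTr : (Tr a f : ℝ → ℂ) =ᵐ[volume] fun x => f (x - a) :=
    Lp.coeFn_compMeasurePreserving f _
  have hTrf : Integrable (Tr a f : ℝ → ℂ) := (hf.comp_sub_right a).congr hTr.symm
  refine Lp.ext ?_
  filter_upwards [hF _ hTrf, hF f hf, Lp.coeFn_lpSMul (r := 2) (expLinf a) (F f), coeFn_expLinf a]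
    with ω hTω hfω hsmul hexp
  rw [hTω, hsmul, Pi.smul_apply', hexp, hfω, funext (Real.fourier_congr_ae hTr),
    Real.fourier_comp_sub_right, smul_eq_mul]

lemma IsFourierTransform.map_Tr (hF : IsFourierTransform F) (a : ℝ) (f : L2) :
    F (Tr a f) = expLinf a • F f := by
  refine Lp.induction (p := 2) ENNReal.ofNat_ne_top
    (motive := fun f => F (Tr a f) = expLinf a • F f) ?_ ?_ ?_ f
  · intro c s hs hμs
    refine hF.map_Tr_of_integrable a ?_
    exact (integrable_indicator_iff hs).mpr (integrableOn_const hμs.ne) |>.congr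
      (indicatorConstLp_coeFn (hs := hs) (hμs := hμs.ne) (c := c)).symm
  · intro f g hf hg _ hfa hga
    simp only [Tr, map_add] at hfa hga ⊢
    rw [hfa, hga, Lp.add_smul]
  · exact isClosed_eq (F.continuous.comp (Lp.isometry_compMeasurePreserving _).continuous)
      ((continuous_lpSMul_right _).comp F.continuous)

end Fourier

section Periodic

variable (T : ℝ) [Fact (0 < T)]

def periodicLift : C(AddCircle T, ℂ) →L[ℂ] Lp ℂ ∞ (volume : Measure ℝ) :=
  LinearMap.mkContinuous
    { toFun := fun φ : C(AddCircle T, ℂ) => (memLp_top_of_bound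
          (φ.continuous.comp (AddCircle.continuous_mk' T) :
            Continuous fun ω : ℝ => φ ω).aestronglyMeasurable ‖φ‖
          (ae_of_all _ fun _ => φ.norm_coe_le_norm _)).toLp fun ω : ℝ => φ ω
      map_add' := fun φ ψ => MemLp.toLp_add _ _
      map_smul' := fun c φ => MemLp.toLp_const_smul _ _ }
    1 fun φ => by
      rw [one_mul]
      simp only [LinearMap.coe_mk, AddHom.coe_mk]
      rw [Lp.norm_toLp, eLpNorm_exponent_top]
      exact ENNReal.toReal_le_of_le_ofReal (norm_nonneg _)
        (eLpNormEssSup_le_of_ae_bound (ae_of_all _ fun _ => φ.norm_coe_le_norm _))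

variable {T}

lemma coeFn_periodicLift (φ : C(AddCircle T, ℂ)) :
    periodicLift T φ =ᵐ[volume] fun ω : ℝ => φ ω := by
  rw [periodicLift, LinearMap.mkContinuous_apply]
  simp only [LinearMap.coe_mk, AddHom.coe_mk]
  exact MemLp.coeFn_toLp _

lemma periodicLift_fourier (m : ℤ) :
    periodicLift T (fourier (T := T) m) = expLinf (-m / T) := by
  refine Lp.ext ?_
  filter_upwards [coeFn_periodicLift (fourier (T := T) m), coeFn_expLinf (-m / T)] with ω h1 h2
  rw [h1, h2, fourier_coe_apply, Real.fourierChar_apply]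
  congr 1
  push_cast
  ring

lemma exists_tendsto_indicator_Bset {n k : ℕ} (hn : 0 < n) :
    ∃ φ : ℕ → C(AddCircle (n : ℝ), ℂ), (∀ m x, ‖φ m x‖ ≤ 1) ∧
      ∀ᵐ ω : ℝ, Tendsto (fun m => φ m ω) atTop (𝓝 ((Bset n k).indicator 1 ω)) := by
  have : Fact (0 < (n : ℝ)) := ⟨by exact_mod_cast hn⟩
  set E : Set (AddCircle (n : ℝ)) := (↑) '' Set.Ico (k : ℝ) (k + 1)
  have hδ : ∀ m : ℕ, (0 : ℝ) < 1 / (m + 1) := fun m => by positivity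
  refine ⟨fun m => ⟨fun x => ((thickenedIndicator (hδ m) E x : ℝ) : ℂ), by fun_prop⟩,
    fun m x => ?_, ?_⟩
  · simpa using thickenedIndicator_le_one (hδ m) E x
  · filter_upwards [ae_coe_mem_closure_iff_mem_Bset (n := n) (k := k)] with ω hω
    have hlim := tendsto_pi_nhds.mp (thickenedIndicator_tendsto_indicator_closure hδ
      tendsto_one_div_add_atTop_nhds_zero_nat E) ω
    have hval : (Bset n k).indicator 1 ω =
        (Complex.ofReal ∘ NNReal.toReal) ((closure E).indicator (fun _ => 1) ω) := by
      by_cases h : ω ∈ Bset n k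
      · rw [Set.indicator_of_mem h, Set.indicator_of_mem (hω.mpr h)]
        simp
      · rw [Set.indicator_of_notMem h, Set.indicator_of_notMem (mt hω.mp h)]
        simp
    rw [hval]
    exact ((Complex.continuous_ofReal.comp NNReal.continuous_coe).tendsto _).comp hlim

end Periodic

/-- `χ_{B_k}` as a multiplier; the paper's `P_k w` is `F.symm (cutLinf n k • F w)`. -/
def cutLinf (n k : ℕ) : Lp ℂ ∞ (volume : Measure ℝ) :=
  (memLp_top_of_bound (aestronglyMeasurable_const.indicator (measurableSet_Bset n k)) 1
    (ae_of_all _ fun ω => (norm_indicator_le_norm_self (1 : ℝ → ℂ) ω).trans_eq norm_one)).toLp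
      ((Bset n k).indicator 1)

lemma coeFn_cutLinf (n k : ℕ) : cutLinf n k =ᵐ[volume] (Bset n k).indicator 1 :=
  MemLp.coeFn_toLp _

section Invariance

variable {F : L2 ≃ₗᵢ[ℂ] L2} {n : ℕ} {S : Submodule ℂ L2}

lemma IsFourierTransform.symm_periodicLift_smul_mem [Fact (0 < (n : ℝ))]
    (hF : IsFourierTransform F) (hS : IsClosed (S : Set L2))
    (hninv : ∀ f ∈ S, ∀ j : ℤ, Tr ((j : ℝ) / n) f ∈ S) {f : L2} (hf : f ∈ S)
    (φ : C(AddCircle (n : ℝ), ℂ)) : F.symm (periodicLift n φ • F f) ∈ S := by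
  let Ψ : C(AddCircle (n : ℝ), ℂ) →L[ℂ] L2 := (F.symm.toContinuousLinearEquiv : L2 →L[ℂ] L2).comp
    ((((ContinuousLinearMap.lsmul ℂ ℂ).holderL volume ∞ 2 2).flip (F f)).comp (periodicLift n))
  have hfourier : ∀ m : ℤ, Ψ (fourier m) ∈ S := fun m => by
    change F.symm (periodicLift n (fourier m) • F f) ∈ S
    rw [periodicLift_fourier, ← hF.map_Tr, F.symm_apply_apply]
    simpa [neg_div] using hninv f hf (-m)
  have hclosure : (Submodule.span ℂ (Set.range fourier)).topologicalClosure ≤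
      S.comap Ψ.toLinearMap :=
    Submodule.topologicalClosure_minimal _
      (Submodule.span_le.mpr (Set.range_subset_iff.mpr hfourier)) (hS.preimage Ψ.continuous)
  rw [span_fourier_closure_eq_top] at hclosure
  exact hclosure (Submodule.mem_top (x := φ))

lemma IsFourierTransform.symm_cutLinf_smul_mem (hF : IsFourierTransform F) (hn : 0 < n)
    (hS : IsClosed (S : Set L2)) (hninv : ∀ f ∈ S, ∀ j : ℤ, Tr ((j : ℝ) / n) f ∈ S)
    {f : L2} (hf : f ∈ S) (k : ℕ) : F.symm (cutLinf n k • F f) ∈ S := by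
  have : Fact (0 < (n : ℝ)) := ⟨by exact_mod_cast hn⟩
  obtain ⟨φ, hφ_le, hφ_lim⟩ := exists_tendsto_indicator_Bset (k := k) hn
  have hconv : Tendsto (fun m => periodicLift n (φ m) • F f) atTop (𝓝 (cutLinf n k • F f)) := by
    refine tendsto_lpSMul_of_ae_tendsto (C := 1)
      (fun m => (coeFn_periodicLift (φ m)).mono fun ω h => h ▸ hφ_le m ω) ?_ (F f)
    filter_upwards [ae_all_iff.mpr fun m => coeFn_periodicLift (φ m), hφ_lim, coeFn_cutLinf n k]
      with ω h1 h2 h3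
    simpa only [h1, h3] using h2
  exact hS.mem_of_tendsto ((F.symm.continuous.tendsto _).comp hconv)
    (Eventually.of_forall fun m => hF.symm_periodicLift_smul_mem hS hninv hf (φ m))

end Invariance

lemma coeFn_cutLinf_smul (n k : ℕ) (u : L2) :
    (cutLinf n k • u : L2) =ᵐ[volume] (Bset n k).indicator u := by
  filter_upwards [Lp.coeFn_lpSMul (r := 2) (cutLinf n k) u, coeFn_cutLinf n k] with ω h1 h2
  by_cases hω : ω ∈ Bset n k <;> simp [h1, h2, hω]

lemma IsFourierTransform.inner_Tr_eq_inner_cutLinf {F : L2 ≃ₗᵢ[ℂ] L2} (hF : IsFourierTransform F)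
    {n k : ℕ} {f g : L2} (hg : (F g : ℝ → ℂ) =ᵐ[volume] (Bset n k).indicator (F f : ℝ → ℂ))
    (w : L2) (a : ℝ) :
    inner ℂ w (Tr a g) = inner ℂ (F.symm (cutLinf n k • F w)) (Tr a f) := by
  rw [← F.inner_map_map w, ← F.inner_map_map (F.symm _), F.apply_symm_apply, hF.map_Tr,
    hF.map_Tr, L2.inner_def, L2.inner_def]
  refine integral_congr_ae ?_
  filter_upwards [Lp.coeFn_lpSMul (r := 2) (expLinf a) (F g),
    Lp.coeFn_lpSMul (r := 2) (expLinf a) (F f), coeFn_cutLinf_smul n k (F w), hg]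
    with ω h1 h2 h3 h4
  rw [h1, h2, h3, Pi.smul_apply', Pi.smul_apply', h4]
  by_cases hω : ω ∈ Bset n k <;> simp [hω]

theorem stmt13_general (F : L2 ≃ₗᵢ[ℂ] L2) (hF : IsFourierTransform F)
    (n : ℕ) (hn : 0 < n)
    (S : Submodule ℂ L2) (hS : IsClosed (S : Set L2))
    (hninv : ∀ f ∈ S, ∀ j : ℤ, Tr ((j : ℝ) / n) f ∈ S)
    (𝒢 : Set L2)
    (A B : ℝ) (hA : 0 < A)
    (hframe : ∀ w ∈ S, A * ‖w‖ ^ 2 ≤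
        (∑' p : 𝒢 × ℤ, ‖(inner ℂ w (Tr (p.2 : ℝ) (p.1 : L2)) : ℂ)‖ ^ 2) ∧
      (∑' p : 𝒢 × ℤ, ‖(inner ℂ w (Tr (p.2 : ℝ) (p.1 : L2)) : ℂ)‖ ^ 2) ≤ B * ‖w‖ ^ 2)
    (P : 𝒢 → Fin n → L2)
    (hP : ∀ (f : 𝒢) (k : Fin n),
      (F (P f k) : ℝ → ℂ) =ᵐ[volume] (Bset n k).indicator (F (f : L2) : ℝ → ℂ)) :
    ∀ w ∈ S, A * ‖w‖ ^ 2 ≤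
        (∑' p : 𝒢 × ℤ × Fin n, ‖(inner ℂ w (Tr (p.2.1 : ℝ) (P p.1 p.2.2)) : ℂ)‖ ^ 2) ∧
      (∑' p : 𝒢 × ℤ × Fin n, ‖(inner ℂ w (Tr (p.2.1 : ℝ) (P p.1 p.2.2)) : ℂ)‖ ^ 2) ≤
        B * ‖w‖ ^ 2 := by
  intro w hw
  set Q : Fin n → L2 := fun k => F.symm (cutLinf n k • F w)
  have hQ : ∑ k, ‖Q k‖ ^ 2 = ‖w‖ ^ 2 := by
    simp only [Q, LinearIsometryEquiv.norm_map]
    rw [← F.norm_map w]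
    exact sum_norm_sq_eq_of_partition (s := fun k : Fin n => Bset n k)
      (fun k => measurableSet_Bset n k) pairwise_disjoint_Bset (iUnion_Bset hn) (F w)
      fun k => coeFn_cutLinf_smul n k (F w)
  have hbounds := frame_bounds_of_sum_norm_sq (v := fun q : 𝒢 × ℤ => Tr (q.2 : ℝ) (q.1 : L2))
    hA hQ fun k => hframe (Q k) (hF.symm_cutLinf_smul_mem hn hS hninv hw k)
  have hreindex : ∑' p : 𝒢 × ℤ × Fin n, ‖(inner ℂ w (Tr (p.2.1 : ℝ) (P p.1 p.2.2)) : ℂ)‖ ^ 2 =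
      ∑' p : Fin n × (𝒢 × ℤ), ‖(inner ℂ (Q p.1) (Tr (p.2.2 : ℝ) (p.2.1 : L2)) : ℂ)‖ ^ 2 := by
    let e := (Equiv.prodAssoc 𝒢 ℤ (Fin n)).symm.trans (Equiv.prodComm (𝒢 × ℤ) (Fin n))
    refine (tsum_congr fun p => ?_).trans
      (e.tsum_eq fun p => ‖(inner ℂ (Q p.1) (Tr (p.2.2 : ℝ) (p.2.1 : L2)) : ℂ)‖ ^ 2)
    rw [hF.inner_Tr_eq_inner_cutLinf (hP p.1 p.2.2)]
    rfl
  rw [hreindex]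
  exact hbounds

/-- If the integer translates of `𝒢 ⊆ S` form a frame for a `(1/n)ℤ`-invariant SIS `S`
with bounds `A, B`, then the integer translates of all the cutoffs `P_k f`, `f ∈ 𝒢`,
`k = 0, …, n-1`, form a frame for `S` with the same bounds. -/
theorem stmt13 (F : L2 ≃ₗᵢ[ℂ] L2) (hF : IsFourierTransform F)
    (n : ℕ) (hn : 0 < n)
    (S : Submodule ℂ L2) (hS : IsClosed (S : Set L2))
    (hinv : ∀ f ∈ S, ∀ j : ℤ, Tr (j : ℝ) f ∈ S)
    (hninv : ∀ f ∈ S, ∀ j : ℤ, Tr ((j : ℝ) / n) f ∈ S)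
    (𝒢 : Set L2) (hcount : 𝒢.Countable) (h𝒢S : 𝒢 ⊆ (S : Set L2))
    (A B : ℝ) (hA : 0 < A) (hB : 0 < B)
    (hframe : ∀ w ∈ S, A * ‖w‖ ^ 2 ≤
        (∑' p : 𝒢 × ℤ, ‖(inner ℂ w (Tr (p.2 : ℝ) (p.1 : L2)) : ℂ)‖ ^ 2) ∧
      (∑' p : 𝒢 × ℤ, ‖(inner ℂ w (Tr (p.2 : ℝ) (p.1 : L2)) : ℂ)‖ ^ 2) ≤ B * ‖w‖ ^ 2)
    (P : 𝒢 → Fin n → L2)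
    (hP : ∀ (f : 𝒢) (k : Fin n),
      (F (P f k) : ℝ → ℂ) =ᵐ[volume] (Bset n k).indicator (F (f : L2) : ℝ → ℂ)) :
    ∀ w ∈ S, A * ‖w‖ ^ 2 ≤
        (∑' p : 𝒢 × ℤ × Fin n, ‖(inner ℂ w (Tr (p.2.1 : ℝ) (P p.1 p.2.2)) : ℂ)‖ ^ 2) ∧
      (∑' p : 𝒢 × ℤ × Fin n, ‖(inner ℂ w (Tr (p.2.1 : ℝ) (P p.1 p.2.2)) : ℂ)‖ ^ 2) ≤
        B * ‖w‖ ^ 2 :=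
  stmt13_general F hF n hn S hS hninv 𝒢 A B hA hframe P hP
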